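/- If φ is a minimal separating embedding of a graph G into a surface S, then for every edge e of G, the arc φ(e) is contained in the boundary of both regions of the embedding. -/

import Mathlib

/-!
Common framework: finite undirected multigraphs (possibly with loops),
surfaces (closed connected triangulated orientable 2-manifolds, carrying their
genus as data since the classification of surfaces is not available in Mathlib),
graph embeddings into surfaces, (minimal) separating sets, regions,
isolated loops, graph isomorphism/subdivision/homeomorphism,
rotation systems and their boundary walks (face tracing).
-/

/-- A finite undirected multigraph, possibly with loops.  Each edge carries an
(arbitrary) ordering of its two endpoints; all undirected notions depend only on
the unordered pair `ends`. -/
structure Multigraph where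
  V : Type
  E : Type
  finV : Finite V
  finE : Finite E
  src : E → V
  tgt : E → V

attribute [instance] Multigraph.finV Multigraph.finE

namespace Multigraph

variable (G : Multigraph)

/-- The unordered pair of endpoints of an edge. -/
def ends (e : G.E) : Sym2 G.V := s(G.src e, G.tgt e)

/-- `v` is incident to the edge `e`. -/
def Incident (v : G.V) (e : G.E) : Prop := G.src e = v ∨ G.tgt e = v

/-- A loop is an edge whose two endpoints coincide. -/
def IsLoop (e : G.E) : Prop := G.src e = G.tgt e

/-- The degree of a vertex: the number of edge-ends at it (a loop counts twice). -/
noncomputable def degree (v : G.V) : ℕ :=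
  Nat.card {e : G.E // G.src e = v} + Nat.card {e : G.E // G.tgt e = v}

/-- An isolated vertex is incident to no edge. -/
def IsIsolated (v : G.V) : Prop := ∀ e : G.E, ¬ G.Incident v e

/-- The connected component of `v` is an *isolated loop*: `v` is incident to
exactly one edge, and every edge incident to `v` is a loop at `v`. -/
def IsIsolatedLoopAt (v : G.V) : Prop :=
  (∃! e : G.E, G.Incident v e) ∧ ∀ e : G.E, G.Incident v e → G.src e = v ∧ G.tgt e = v

/-- The number `|B|` of isolated-loop components of `G`. -/
noncomputable def loopCount : ℕ := Nat.card {v : G.V // G.IsIsolatedLoopAt v}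

/-- `G \ B` : the graph `G` with all isolated-loop components removed. -/
def deleteLoops : Multigraph where
  V := {v : G.V // ¬ G.IsIsolatedLoopAt v}
  E := {e : G.E // ¬ G.IsIsolatedLoopAt (G.src e) ∧ ¬ G.IsIsolatedLoopAt (G.tgt e)}
  finV := Subtype.finite
  finE := Subtype.finite
  src e := ⟨G.src e.1, e.2.1⟩
  tgt e := ⟨G.tgt e.1, e.2.2⟩

/-- Isomorphism of multigraphs. -/
structure Iso (G H : Multigraph) where
  vEquiv : G.V ≃ H.V
  eEquiv : G.E ≃ H.E
  ends_eq : ∀ e : G.E, H.ends (eEquiv e) = Sym2.map vEquiv (G.ends e)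

/-- The elementary subdivision of `G` at the edge `e₀`: `e₀` is replaced by a
path of length two through a new vertex. -/
def subdivide (e₀ : G.E) : Multigraph where
  V := G.V ⊕ Unit
  E := {e : G.E // e ≠ e₀} ⊕ Bool
  finV := by infer_instance
  finE := by infer_instance
  src x :=
    match x with
    | Sum.inl e => Sum.inl (G.src e.1)
    | Sum.inr false => Sum.inl (G.src e₀)
    | Sum.inr true => Sum.inr ()
  tgt x :=
    match x with
    | Sum.inl e => Sum.inl (G.tgt e.1)
    | Sum.inr false => Sum.inr ()
    | Sum.inr true => Sum.inl (G.tgt e₀)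

/-- One subdivision step (up to isomorphism). -/
def SubdivStep (G H : Multigraph) : Prop :=
  ∃ e₀ : G.E, Nonempty (Iso (G.subdivide e₀) H)

/-- `IsSubdivisionOf G H` means: `H` is a subdivision of `G` (obtained from `G`
by subdividing zero or more edges). -/
def IsSubdivisionOf (G H : Multigraph) : Prop := Relation.ReflTransGen SubdivStep G H

/-- Two graphs are graph-homeomorphic if they have isomorphic subdivisions. -/
def GraphHomeomorphic (G H : Multigraph) : Prop :=
  ∃ G' H' : Multigraph,
    IsSubdivisionOf G G' ∧ IsSubdivisionOf H H' ∧ Nonempty (Iso G' H')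

/-- `G` is homeomorphically irreducible: any graph homeomorphic to `G` either
is (isomorphic to) `G` or is a subdivision of `G`. -/
def HomeomorphicallyIrreducible (G : Multigraph) : Prop :=
  ∀ H : Multigraph, GraphHomeomorphic G H → (Nonempty (Iso G H) ∨ IsSubdivisionOf G H)

/-- A cycle in a multigraph: a closed walk with no repeated vertices and no
repeated edges (a loop edge is a cycle of length one). -/
structure Cycle (G : Multigraph) where
  n : ℕ
  npos : 0 < n
  vtx : ZMod n → G.V
  edge : ZMod n → G.E
  vtx_inj : Function.Injective vtx
  edge_inj : Function.Injective edge
  ends_eq : ∀ i : ZMod n, G.ends (edge i) = s(vtx i, vtx (i + 1))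

/-- Disjoint union of two multigraphs. -/
def sum (G H : Multigraph) : Multigraph where
  V := G.V ⊕ H.V
  E := G.E ⊕ H.E
  finV := by infer_instance
  finE := by infer_instance
  src := Sum.map G.src H.src
  tgt := Sum.map G.tgt H.tgt

/-- A dart (edge-end) of `G`: an edge together with a chosen end. -/
abbrev Dart : Type := G.E × Bool

/-- The vertex at which a dart is based. -/
def dartVertex (d : G.Dart) : G.V := bif d.2 then G.tgt d.1 else G.src d.1

/-- The involution exchanging the two darts of each edge. -/
def dartFlip : Equiv.Perm G.Dart where
  toFun d := (d.1, !d.2)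
  invFun d := (d.1, !d.2)
  left_inv d := by simp
  right_inv d := by simp

/-- A (pure) rotation system on `G`: a permutation of the darts fixing the base
vertex of every dart and acting as a single cycle on the darts at each vertex;
it records the clockwise cyclic ordering of edge-ends around each vertex. -/
structure RotationSystem (G : Multigraph) where
  rot : Equiv.Perm G.Dart
  vertex_eq : ∀ d : G.Dart, G.dartVertex (rot d) = G.dartVertex d
  cyclic : ∀ d d' : G.Dart, G.dartVertex d = G.dartVertex d' → rot.SameCycle d d'

/-- The edge `e` appears in the boundary walk `O` (a set of darts). -/
def EdgeIn (O : Set G.Dart) (e : G.E) : Prop := ∃ d ∈ O, d.1 = e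

namespace RotationSystem

variable {G : Multigraph} (R : RotationSystem G)

/-- The face-tracing permutation of a rotation system. -/
def facePerm : Equiv.Perm G.Dart := R.rot * G.dartFlip

/-- The boundary components (boundary walks) of the reduced band decomposition
of the embedding determined by `R`: the orbits of face tracing. -/
def boundaryComponents : Set (Set G.Dart) :=
  {O | ∃ d : G.Dart, O = {d' | R.facePerm.SameCycle d d'}}

/-- The number of boundary components of the reduced band decomposition. -/
noncomputable def numBoundary : ℕ := R.boundaryComponents.ncard

/-- `R` is two-sided with respect to the partition `B₁, B₂` of its boundary
components: every edge of `G` appears in a boundary walk of `B₁` and in a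
boundary walk of `B₂`. -/
def IsTwoSidedWith (B₁ B₂ : Set (Set G.Dart)) : Prop :=
  B₁ ∪ B₂ = R.boundaryComponents ∧ Disjoint B₁ B₂ ∧
    (∀ e : G.E, ∃ O ∈ B₁, G.EdgeIn O e) ∧ (∀ e : G.E, ∃ O ∈ B₂, G.EdgeIn O e)

/-- `R` is a two-sided rotation system. -/
def IsTwoSided : Prop := ∃ B₁ B₂ : Set (Set G.Dart), R.IsTwoSidedWith B₁ B₂

end RotationSystem

end Multigraph

/-- A surface: a closed (compact, boundaryless), connected, triangulated,
orientable 2-manifold.  Since the classification of surfaces is not available,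
the genus of the surface is recorded as data of the structure:  `Surface`s with
`genus = g` represent the orientable surface of genus `g`. -/
structure Surface where
  carrier : Type
  topology : TopologicalSpace carrier
  compact : CompactSpace carrier
  t2 : T2Space carrier
  connected : ConnectedSpace carrier
  locallyEuclidean : ∀ x : carrier, ∃ U : Set carrier, IsOpen U ∧ x ∈ U ∧
    Nonempty (U ≃ₜ (ℝ × ℝ))
  /-- The genus of the closed orientable surface. -/
  genus : ℕ

attribute [instance] Surface.topology

/-- An embedding of a multigraph `G` into a surface `S`: vertices go to distinct
points, edges go to simple arcs joining the images of their endpoints, the arcs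
have no vertex image in their interior, and two distinct arcs meet only at
endpoints. -/
structure GraphEmbedding (G : Multigraph) (S : Surface) where
  vmap : G.V → S.carrier
  emap : G.E → C(unitInterval, S.carrier)
  vmap_inj : Function.Injective vmap
  emap_src : ∀ e : G.E, emap e 0 = vmap (G.src e)
  emap_tgt : ∀ e : G.E, emap e 1 = vmap (G.tgt e)
  emap_inj : ∀ e : G.E, ∀ s t : unitInterval, emap e s = emap e t →
    s = t ∨ (s = 0 ∧ t = 1) ∨ (s = 1 ∧ t = 0)
  interior_avoids_vertices : ∀ e : G.E, ∀ v : G.V, ∀ t : unitInterval,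
    emap e t = vmap v → t = 0 ∨ t = 1
  arcs_meet_at_endpoints : ∀ e₁ e₂ : G.E, e₁ ≠ e₂ → ∀ s t : unitInterval,
    emap e₁ s = emap e₂ t → (s = 0 ∨ s = 1) ∧ (t = 0 ∨ t = 1)

namespace GraphEmbedding

variable {G : Multigraph} {S : Surface}

/-- The image `φ[G]` of a graph embedding. -/
def image (φ : GraphEmbedding G S) : Set S.carrier :=
  Set.range φ.vmap ∪ ⋃ e : G.E, Set.range ⇑(φ.emap e)

end GraphEmbedding

/-- `M` separates `S`: the complement `S \ M` is not connected. -/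
def Separates (S : Surface) (M : Set S.carrier) : Prop := ¬ IsPreconnected Mᶜ

/-- `M` is a minimal separating set of `S`. -/
def IsMinimalSeparating (S : Surface) (M : Set S.carrier) : Prop :=
  Separates S M ∧ ∀ M' : Set S.carrier, M' ⊂ M → ¬ Separates S M'

/-- The regions of (the image of) an embedding: the connected components of the
complement `S \ M`. -/
def regions (S : Surface) (M : Set S.carrier) : Set (Set S.carrier) :=
  {r : Set S.carrier | ∃ x ∈ Mᶜ, r = connectedComponentIn Mᶜ x}

/-- `G ∈ 𝔾_g`: `G` is a minimal separating graph of the orientable surface of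
genus `g`, i.e. `G` is the homeomorphically irreducible graph underlying some
minimal separating set of that surface. -/
def MinSepGraph (g : ℕ) (G : Multigraph) : Prop :=
  G.HomeomorphicallyIrreducible ∧
    ∃ S : Surface, S.genus = g ∧
      ∃ φ : GraphEmbedding G S, IsMinimalSeparating S φ.image

/-- The rotation system `R` corresponds to the embedding `φ`: the boundary
walks of the reduced band decomposition of `R` match up (surjectively) with the
regions of `φ`, each boundary walk bounding its region, in the sense that every
edge appearing in a boundary walk lies in the topological boundary of the
corresponding region. -/
def Realizes {G : Multigraph} {S : Surface} (φ : GraphEmbedding G S)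
    (R : Multigraph.RotationSystem G) : Prop :=
  ∃ β : R.boundaryComponents → regions S φ.image,
    Function.Surjective β ∧
      ∀ (O : R.boundaryComponents) (e : G.E), G.EdgeIn O.1 e →
        Set.range ⇑(φ.emap e) ⊆ frontier (β O : Set S.carrier)

/-- A cellular embedding: every region is homeomorphic to an open disk. -/
def IsCellular {G : Multigraph} {S : Surface} (φ : GraphEmbedding G S) : Prop :=
  ∀ r ∈ regions S φ.image, Nonempty (r ≃ₜ Metric.ball (0 : ℝ × ℝ) 1)

/-- The least separated genus `γ₋(G)`: the minimal genus of an orientable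
surface in which `G` embeds as a minimal separating set; `∞` if there is none. -/
noncomputable def gammaMinus (G : Multigraph) : ℕ∞ :=
  sInf {n : ℕ∞ | ∃ g : ℕ, n = g ∧ ∃ S : Surface, S.genus = g ∧
    ∃ φ : GraphEmbedding G S, IsMinimalSeparating S φ.image}

/-- The genera of orientable surfaces admitting a cellular embedding of `G`. -/
def cellGenera (G : Multigraph) : Set ℕ :=
  {g : ℕ | ∃ S : Surface, S.genus = g ∧ ∃ φ : GraphEmbedding G S, IsCellular φ}

/-- The minimum genus `γ_min(G)` over all cellular embeddings of `G`. -/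
noncomputable def gammaMin (G : Multigraph) : ℕ∞ :=
  sInf ((↑) '' cellGenera G : Set ℕ∞)

/-- The maximum genus `γ_max(G)` over all cellular embeddings of `G`. -/
noncomputable def gammaMax (G : Multigraph) : ℕ∞ :=
  sSup ((↑) '' cellGenera G : Set ℕ∞)

/-- The genera of orientable surfaces admitting an *irreducible* minimal
separating embedding of `G`: one arising from a two-sided rotation system with
`N` boundary components, the genus of the surface being exactly
`(|E| - |V| + N)/2 - 1`. -/
def irrSepGenera (G : Multigraph) : Set ℕ :=
  {g : ℕ | ∃ S : Surface, S.genus = g ∧ ∃ φ : GraphEmbedding G S,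
    IsMinimalSeparating S φ.image ∧
      ∃ R : Multigraph.RotationSystem G, Realizes φ R ∧ R.IsTwoSided ∧
        Nat.card G.E + R.numBoundary = Nat.card G.V + 2 * g + 2}

open Classical in
/-- The largest irreducibly separated genus `γ₊(G)`; `∞` if the relevant set of
surfaces is empty or its genera are unbounded. -/
noncomputable def gammaPlus (G : Multigraph) : ℕ∞ :=
  if (irrSepGenera G).Nonempty ∧ BddAbove (irrSepGenera G)
  then sSup ((↑) '' irrSepGenera G : Set ℕ∞) else ⊤

theorem LocallyConnectedSpace.of_isOpen_cover {X : Type*} [TopologicalSpace X]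
    (h : ∀ x : X, ∃ W : Set X, IsOpen W ∧ x ∈ W ∧ LocallyConnectedSpace W) :
    LocallyConnectedSpace X := by
  rw [locallyConnectedSpace_iff_connected_subsets]
  intro x U hU
  obtain ⟨W, hW, hxW, hWloc⟩ := h x
  obtain ⟨V, hV, hVpre, hVU⟩ := locallyConnectedSpace_iff_connected_subsets.mp hWloc ⟨x, hxW⟩
    (Subtype.val ⁻¹' U) (continuous_subtype_val.continuousAt.preimage_mem_nhds hU)
  exact ⟨Subtype.val '' V, hW.isOpenMap_subtype_val.image_mem_nhds hV,
    hVpre.image _ continuous_subtype_val.continuousOn, Set.image_subset_iff.mpr hVU⟩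

section ConnectedComponentIn

variable {X : Type*} [TopologicalSpace X]

theorem mem_connectedComponentIn_of_mem_closure {U : Set X} {x y : X} (hy : y ∈ U)
    (hyx : y ∈ closure (connectedComponentIn U x)) : y ∈ connectedComponentIn U x := by
  have hx : x ∈ U := connectedComponentIn_nonempty_iff.mp (closure_nonempty_iff.mp ⟨y, hyx⟩)
  have hpre : IsPreconnected (insert y (connectedComponentIn U x)) :=
    isPreconnected_connectedComponentIn.subset_closure (Set.subset_insert _ _)
      (Set.insert_subset hyx subset_closure)
  exact hpre.subset_connectedComponentIn (Set.mem_insert_of_mem _ (mem_connectedComponentIn hx))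
    (Set.insert_subset hy (connectedComponentIn_subset _ _)) (Set.mem_insert _ _)

theorem IsClosed.mem_closure_connectedComponentIn_compl [LocallyConnectedSpace X] {M : Set X}
    (hM : IsClosed M) {x y : X} (hx : x ∈ M) (hy : y ∉ M)
    (hpre : IsPreconnected (insert x Mᶜ)) : x ∈ closure (connectedComponentIn Mᶜ y) := by
  -- Otherwise the component is open and relatively closed in `insert x Mᶜ`, so it contains `x`.
  by_contra hxC
  have hsub : insert x Mᶜ ⊆ connectedComponentIn Mᶜ y := by
    refine hpre.subset_of_closure_inter_subset hM.isOpen_compl.connectedComponentIn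
      ⟨y, Set.mem_insert_of_mem _ hy, mem_connectedComponentIn hy⟩ ?_
    rintro p ⟨hpC, rfl | hp⟩
    · exact absurd hpC hxC
    · exact mem_connectedComponentIn_of_mem_closure hp hpC
  exact connectedComponentIn_subset _ _ (hsub (Set.mem_insert x _)) hx

end ConnectedComponentIn

namespace Surface

variable (S : Surface)

instance : T2Space S.carrier := S.t2

instance : LocallyConnectedSpace S.carrier :=
  .of_isOpen_cover fun x ↦
    let ⟨W, hW, hxW, ⟨e⟩⟩ := S.locallyEuclidean x
    ⟨W, hW, hxW, e.locallyConnectedSpace⟩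

end Surface

theorem IsMinimalSeparating.subset_frontier {S : Surface} {M : Set S.carrier}
    (h : IsMinimalSeparating S M) (hM : IsClosed M) {r : Set S.carrier}
    (hr : r ∈ regions S M) : M ⊆ frontier r := by
  obtain ⟨y, hy, rfl⟩ := hr
  intro x hx
  have hpre : IsPreconnected (insert x Mᶜ) := by
    have := h.2 (M \ {x}) (Set.sdiff_singleton_ssubset.mpr hx)
    rwa [Separates, not_not, Set.compl_sdiff, ← Set.insert_eq] at this
  exact ⟨hM.mem_closure_connectedComponentIn_compl hx hy hpre,
    fun hint ↦ connectedComponentIn_subset _ _ (interior_subset hint) hx⟩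

theorem GraphEmbedding.isClosed_image {G : Multigraph} {S : Surface}
    (φ : GraphEmbedding G S) : IsClosed φ.image :=
  (Set.finite_range φ.vmap).isClosed.union <|
    isClosed_iUnion_of_finite fun e ↦ (isCompact_range (φ.emap e).continuous).isClosed

theorem GraphEmbedding.range_emap_subset_image {G : Multigraph} {S : Surface}
    (φ : GraphEmbedding G S) (e : G.E) : Set.range ⇑(φ.emap e) ⊆ φ.image :=
  Set.subset_union_of_subset_right
    (Set.subset_iUnion (fun e ↦ Set.range ⇑(φ.emap e)) e) _

/-- If `φ` is a minimal separating embedding of a graph `G` into a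
surface `S`, then for every edge `e` of `G`, the arc `φ(e)` is contained in the
boundary of both regions of the embedding. -/
theorem minimal_separating_embedding_edge_in_boundary_of_both_regions
    (G : Multigraph) (S : Surface) (φ : GraphEmbedding G S)
    (h : IsMinimalSeparating S φ.image) :
    ∀ e : G.E, ∀ r ∈ regions S φ.image, Set.range ⇑(φ.emap e) ⊆ frontier r :=
  fun e _ hr ↦ (φ.range_emap_subset_image e).trans (h.subset_frontier φ.isClosed_image hr)
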